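/- arXiv:2307.10851 — 2 statements merged into one kernel-verified Lean document; each statement's English description precedes it below -/
import Mathlib

section
/- Let c > 0 and 0 < η < 1 be real numbers. There exist a positive integer N₁ and a constant 0 < λ < 1, both depending only on c and η, such that for every integer N ≥ N₁ the following holds: for every square S ⊂ ℂ of side length l and every nonempty measurable subset E ⊆ S, if there exist functions r₁,…,r_N : E → ℝ and y₁,…,y_N : E → ℂ such that for all x ∈ E: (a) 0 < r₁(x) ≤ l·η; (b) 0 < r_{n+1}(x) ≤ η·r_n(x) for all 1 ≤ n < N; (c) y_n(x) ∈ B(x, c·r_n(x)) for all 1 ≤ n ≤ N; and (d) B(y_n(x), r_n(x)) ∩ E = ∅ for all 1 ≤ n ≤ N; then area(E) ≤ λ^N · area(S). -/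
/-!
Each coordinate axis carries two families of nested dyadic grids, shifted against each other by a
third of the mesh; at every level one of them has a given point at depth at least `1/7` inside its
interval. For each of the four product grids, call a cell porous if the cells `d` levels deeper
that meet `E` cover at most a fraction `q < 1` of it. If `x ∈ E` is deep in its cell of mesh
`h ≈ 14 (1 + c) r_n(x)`, the hole `B(y_n(x), r_n(x))` lies in that cell and takes up a fixed
fraction of it, so the cell is porous. An induction over the levels shows that the points of `E`
lying in `j` porous cells have area at most `λ ^ j` times the area of the square, where
`q ≤ λ ^ d`. Since the radii decay geometrically, at most `L` scales share a level, and by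
pigeonhole every point of `E` lies in at least `N / (4 L)` porous cells of one of the four grids.
-/

open MeasureTheory

/-- The closed axis-parallel square `{z : Re z ∈ [a, a+l], Im z ∈ [b, b+l]}`. -/
def Square (a b l : ℝ) : Set ℂ :=
  {z : ℂ | z.re ∈ Set.Icc a (a + l) ∧ z.im ∈ Set.Icc b (b + l)}

open Set

theorem card_le_of_forall_lt_two_mul {r : ℕ → ℝ} {L : ℕ} {s : Finset ℕ}
    (hhalf : ∀ k ∈ s, ∀ k' ∈ s, k + L ≤ k' → 2 * r k' ≤ r k)
    (hclose : ∀ k ∈ s, ∀ k' ∈ s, r k < 2 * r k') : s.card ≤ L := by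
  rcases s.eq_empty_or_nonempty with rfl | hne
  · simp
  have hsub : s ⊆ Finset.Ico (s.min' hne) (s.min' hne + L) := fun k hk =>
    Finset.mem_Ico.2 ⟨s.min'_le k hk, not_le.1 fun h =>
      (hhalf _ (s.min'_mem hne) k hk h).not_gt (hclose _ (s.min'_mem hne) k hk)⟩
  exact (Finset.card_le_card hsub).trans (by simp)

theorem le_pow_mul_of_forall_le_mul {r : ℕ → ℝ} {η : ℝ} {a b : ℕ} (hη : 0 ≤ η)
    (h : ∀ n, a ≤ n → n < b → r (n + 1) ≤ η * r n) {k k' : ℕ} (hak : a ≤ k) (hkk' : k ≤ k')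
    (hk'b : k' ≤ b) : r k' ≤ η ^ (k' - k) * r k := by
  induction k', hkk' using Nat.le_induction with
  | base => simp
  | succ n hkn ih =>
    calc r (n + 1) ≤ η * r n := h n (hak.trans hkn) (by omega)
      _ ≤ η * (η ^ (n - k) * r k) := by gcongr; exact ih (by omega)
      _ = η ^ (n + 1 - k) * r k := by rw [Nat.sub_add_comm hkn, pow_succ]; ring

theorem pos_and_le_pow_mul {r : ℕ → ℝ} {η l : ℝ} {N : ℕ} (hη : 0 ≤ η)
    (h1 : 0 < r 1 ∧ r 1 ≤ l * η) (h : ∀ n, 1 ≤ n → n < N → 0 < r (n + 1) ∧ r (n + 1) ≤ η * r n)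
    {k : ℕ} (hk : 1 ≤ k) (hkN : k ≤ N) : 0 < r k ∧ r k ≤ η ^ k * l := by
  induction k, hk using Nat.le_induction with
  | base => exact ⟨h1.1, by linarith [h1.2]⟩
  | succ n hn ih =>
    obtain ⟨hpos, hle⟩ := h n hn (by omega)
    refine ⟨hpos, hle.trans ?_⟩
    rw [pow_succ]
    nlinarith [(ih (by omega)).2]

theorem exists_pos_lt_one_le_pow {q : ℝ} (hq0 : 0 < q) (hq1 : q < 1) {d : ℕ} (hd : d ≠ 0) :
    ∃ lam : ℝ, 0 < lam ∧ lam < 1 ∧ q ≤ lam ^ d := by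
  have hd1 : (1 : ℝ) ≤ d := by exact_mod_cast Nat.one_le_iff_ne_zero.2 hd
  have hδ : (1 - q) / d ≤ 1 - q := div_le_self (by linarith) hd1
  refine ⟨1 - (1 - q) / d, by linarith, sub_lt_self _ (by apply div_pos <;> linarith), ?_⟩
  have := one_add_mul_le_pow (a := -((1 - q) / d)) (by linarith) d
  rwa [mul_neg, mul_div_cancel₀ _ (Nat.cast_ne_zero.2 hd), ← sub_eq_add_neg, sub_sub_cancel,
    ← sub_eq_add_neg] at this

theorem exists_forall_mul_pow_le_pow {lam C : ℝ} (hlam0 : 0 < lam) (hlam1 : lam < 1) (hC : 0 < C)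
    {p : ℕ} (hp : p ≠ 0) (k : ℕ) : ∃ N₁ : ℕ, ∃ Λ : ℝ, 0 < N₁ ∧ 0 < Λ ∧ Λ < 1 ∧
      ∀ N : ℕ, N₁ ≤ N → C * lam ^ ((N - k) / p) ≤ Λ ^ N := by
  obtain ⟨Λ, hΛ0, hΛ1, hlamΛ⟩ := exists_pos_lt_one_le_pow hlam0 hlam1 (d := 2 * p) (by omega)
  obtain ⟨m, hm⟩ := exists_pow_lt_of_lt_one (inv_pos.2 hC) hΛ1
  refine ⟨2 * k + 2 * p + m, Λ, by omega, hΛ0, hΛ1, fun N hN => ?_⟩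
  have hexp : N + m ≤ 2 * p * ((N - k) / p) := by
    have := Nat.lt_mul_div_succ (N - k) (Nat.pos_of_ne_zero hp)
    rw [mul_add] at this
    rw [mul_assoc]
    omega
  calc C * lam ^ ((N - k) / p) ≤ C * (Λ ^ (2 * p)) ^ ((N - k) / p) := by gcongr
    _ ≤ C * Λ ^ (N + m) := by
        rw [← pow_mul]
        exact mul_le_mul_of_nonneg_left (pow_le_pow_of_le_one hΛ0.le hΛ1.le hexp) hC.le
    _ = Λ ^ N * (C * Λ ^ m) := by ring
    _ ≤ Λ ^ N * 1 := by
        gcongr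
        calc C * Λ ^ m ≤ C * C⁻¹ := by gcongr
          _ = 1 := mul_inv_cancel₀ hC.ne'
    _ = Λ ^ N := mul_one _

theorem volume_reProdIm (s t : Set ℝ) : volume (s ×ℂ t) = volume s * volume t := by
  rw [← Measure.prod_prod, ← Measure.volume_eq_prod,
    ← Complex.volume_preserving_equiv_real_prod.measure_preimage_equiv]
  rfl

theorem volume_square (a b l : ℝ) : volume (Square a b l) = ENNReal.ofReal l ^ 2 := by
  rw [show Square a b l = Icc a (a + l) ×ℂ Icc b (b + l) from rfl, volume_reProdIm,
    Real.volume_Icc, Real.volume_Icc, add_sub_cancel_left, add_sub_cancel_left, sq]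

noncomputable section

namespace ShiftedDyadic

/- Level `k` of grid `j` has mesh `T / 2 ^ k` and is shifted by `(-1) ^ k * j / 3` meshes. The
alternating sign makes the levels of each grid nested (`index_eq_div`); the shifts `0` and `±1/3`
put every point at depth `1/7` in one of the grids `0`, `1` (`isDeep_zero_or_isDeep_one`). -/
def offset (j k : ℕ) : ℝ := (-1) ^ k * j / 3

def index (T : ℝ) (j k : ℕ) (u : ℝ) : ℤ := ⌊u / (T / 2 ^ k) - offset j k⌋

def interval (T : ℝ) (j k : ℕ) (m : ℤ) : Set ℝ :=
  Ico ((m + offset j k) * (T / 2 ^ k)) ((m + 1 + offset j k) * (T / 2 ^ k))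

def IsDeep (T : ℝ) (j k : ℕ) (u : ℝ) : Prop :=
  Int.fract (u / (T / 2 ^ k) - offset j k) ∈ Icc (1 / 7 : ℝ) (6 / 7)

variable {T : ℝ} {j k : ℕ} {m : ℤ} {u w : ℝ}

theorem mem_interval_iff (hT : 0 < T) : u ∈ interval T j k m ↔ index T j k u = m := by
  have hh : 0 < T / 2 ^ k := by positivity
  rw [interval, index, Int.floor_eq_iff, mem_Ico, ← le_div_iff₀ hh, ← div_lt_iff₀ hh]
  constructor <;> rintro ⟨h1, h2⟩ <;> constructor <;> linarith

theorem index_eq_div (hT : T ≠ 0) :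
    index T j k u = (index T j (k + 1) u - (-1) ^ k * j) / 2 := by
  have h : u / (T / 2 ^ k) - offset j k
      = (u / (T / 2 ^ (k + 1)) - offset j (k + 1) - (((-1) ^ k * j : ℤ) : ℝ)) / (2 : ℕ) := by
    simp only [offset, pow_succ]; push_cast; field_simp; ring
  rw [index, h, Int.floor_div_natCast, Int.floor_sub_intCast, index]
  rfl

theorem index_eq_index_of_le (hT : T ≠ 0) {k' : ℕ} (hk : k ≤ k')
    (h : index T j k' w = index T j k' u) : index T j k w = index T j k u := by
  induction k', hk using Nat.le_induction with
  | base => exact h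
  | succ n _ ih => exact ih (by rw [index_eq_div hT, h, ← index_eq_div hT])

theorem volume_interval : volume (interval T j k m) = ENNReal.ofReal (T / 2 ^ k) := by
  rw [interval, Real.volume_Ico]
  ring_nf

theorem abs_sub_lt_of_mem_interval (hu : u ∈ interval T j k m) (hw : w ∈ interval T j k m) :
    |u - w| < T / 2 ^ k := by
  rw [interval, mem_Ico] at hu hw
  rw [abs_sub_lt_iff]
  constructor <;> linarith

theorem isDeep_zero_or_isDeep_one (T : ℝ) (k : ℕ) (u : ℝ) : IsDeep T 0 k u ∨ IsDeep T 1 k u := by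
  have hfract (t : ℝ) (n : ℤ) (ht : t + n ∈ Icc (1 / 7 : ℝ) (6 / 7)) :
      Int.fract t ∈ Icc (1 / 7 : ℝ) (6 / 7) := by
    rwa [← Int.fract_add_intCast t n, Int.fract_eq_self.2 ⟨by linarith [ht.1], by linarith [ht.2]⟩]
  simp only [IsDeep, offset, Nat.cast_zero, Nat.cast_one, mul_zero, zero_div, sub_zero, mul_one]
  generalize u / (T / 2 ^ k) = v
  by_cases h : Int.fract v ∈ Icc (1 / 7 : ℝ) (6 / 7)
  · exact Or.inl h
  right
  have hv := Int.floor_add_fract v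
  rw [mem_Icc, not_and_or, not_le, not_le] at h
  rcases neg_one_pow_eq_or ℝ k with hk | hk <;> rw [hk] <;> rcases h with h | h
  · exact hfract _ (1 - ⌊v⌋) ⟨by push_cast; linarith [Int.fract_nonneg v], by push_cast; linarith⟩
  · exact hfract _ (-⌊v⌋) ⟨by push_cast; linarith, by push_cast; linarith [Int.fract_lt_one v]⟩
  · exact hfract _ (-⌊v⌋) ⟨by push_cast; linarith [Int.fract_nonneg v], by push_cast; linarith⟩
  · exact hfract _ (-⌊v⌋ - 1) ⟨by push_cast; linarith, by push_cast; linarith [Int.fract_lt_one v]⟩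

theorem index_eq_of_isDeep (hT : 0 < T) (hu : IsDeep T j k u) (h : |w - u| < T / 2 ^ k / 7) :
    index T j k w = index T j k u := by
  have hh : 0 < T / 2 ^ k := by positivity
  have hd : |w / (T / 2 ^ k) - u / (T / 2 ^ k)| < 1 / 7 := by
    rw [← sub_div, abs_div, abs_of_pos hh, div_lt_iff₀ hh]; linarith
  rw [IsDeep, Int.fract, mem_Icc] at hu
  rw [index, index, Int.floor_eq_iff]
  rw [abs_lt] at hd
  constructor <;> linarith

def cellIndex (T : ℝ) (α : ℕ × ℕ) (k : ℕ) (z : ℂ) : ℤ × ℤ :=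
  (index T α.1 k z.re, index T α.2 k z.im)

def cell (T : ℝ) (α : ℕ × ℕ) (k : ℕ) (m : ℤ × ℤ) : Set ℂ :=
  interval T α.1 k m.1 ×ℂ interval T α.2 k m.2

def IsDeepInCell (T : ℝ) (α : ℕ × ℕ) (k : ℕ) (z : ℂ) : Prop :=
  IsDeep T α.1 k z.re ∧ IsDeep T α.2 k z.im

variable {α : ℕ × ℕ} {k' : ℕ} {m' : ℤ × ℤ} {z w : ℂ}

theorem mem_cell_iff (hT : 0 < T) {m : ℤ × ℤ} : z ∈ cell T α k m ↔ cellIndex T α k z = m := by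
  rw [cell, Complex.mem_reProdIm, mem_interval_iff hT, mem_interval_iff hT, cellIndex, Prod.ext_iff]

theorem mem_cell_cellIndex (hT : 0 < T) : z ∈ cell T α k (cellIndex T α k z) :=
  (mem_cell_iff hT).2 rfl

theorem cellIndex_eq_of_le (hT : 0 < T) (hk : k ≤ k')
    (h : cellIndex T α k' w = cellIndex T α k' z) : cellIndex T α k w = cellIndex T α k z := by
  simp only [cellIndex, Prod.ext_iff] at h ⊢
  exact ⟨index_eq_index_of_le hT.ne' hk h.1, index_eq_index_of_le hT.ne' hk h.2⟩

theorem cell_subset_cell (hT : 0 < T) {m : ℤ × ℤ} (hk : k ≤ k') (hz' : z ∈ cell T α k' m')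
    (hz : z ∈ cell T α k m) : cell T α k' m' ⊆ cell T α k m := by
  intro w hw
  rw [mem_cell_iff hT] at hz' hz hw ⊢
  rw [← hz, cellIndex_eq_of_le hT hk (hw.trans hz'.symm)]

theorem measurableSet_cell {m : ℤ × ℤ} : MeasurableSet (cell T α k m) :=
  (Complex.measurable_re measurableSet_Ico).inter (Complex.measurable_im measurableSet_Ico)

theorem volume_cell {m : ℤ × ℤ} : volume (cell T α k m) = ENNReal.ofReal (T / 2 ^ k) ^ 2 := by
  rw [cell, volume_reProdIm, volume_interval, volume_interval, sq]

theorem pairwiseDisjoint_cell (hT : 0 < T) (S : Set (ℤ × ℤ)) :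
    S.PairwiseDisjoint (cell T α k) := by
  intro m _ m' _ hne
  refine Set.disjoint_left.2 fun z hz hz' => hne ?_
  rw [mem_cell_iff hT] at hz hz'
  exact hz.symm.trans hz'

theorem dist_lt_of_mem_cell {m : ℤ × ℤ} (hz : z ∈ cell T α k m) (hw : w ∈ cell T α k m) :
    dist z w < 2 * (T / 2 ^ k) := by
  rw [Complex.dist_eq]
  calc ‖z - w‖ ≤ |(z - w).re| + |(z - w).im| := Complex.norm_le_abs_re_add_abs_im _
    _ < T / 2 ^ k + T / 2 ^ k := by
      rw [Complex.sub_re, Complex.sub_im]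
      exact add_lt_add (abs_sub_lt_of_mem_interval hz.1 hw.1) (abs_sub_lt_of_mem_interval hz.2 hw.2)
    _ = 2 * (T / 2 ^ k) := by ring

theorem mem_cell_of_isDeepInCell (hT : 0 < T) (hz : IsDeepInCell T α k z)
    (h : dist w z < T / 2 ^ k / 7) : w ∈ cell T α k (cellIndex T α k z) := by
  rw [Complex.dist_eq] at h
  refine (mem_cell_iff hT).2 (Prod.ext ?_ ?_)
  · exact index_eq_of_isDeep hT hz.1 (by simpa using (Complex.abs_re_le_norm _).trans_lt h)
  · exact index_eq_of_isDeep hT hz.2 (by simpa using (Complex.abs_im_le_norm _).trans_lt h)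

theorem measure_le_of_subset_biUnion_cell (hT : 0 < T) {F : Set ℂ} {S : Set (ℤ × ℤ)}
    {a : ENNReal} (hF : F ⊆ ⋃ m ∈ S, cell T α k m)
    (h : ∀ m ∈ S, volume (F ∩ cell T α k m) ≤ a * volume (cell T α k m)) :
    volume F ≤ a * volume (⋃ m ∈ S, cell T α k m) :=
  calc volume F ≤ volume (⋃ m ∈ S, F ∩ cell T α k m) := by
        rw [← inter_iUnion₂]
        exact measure_mono (subset_inter subset_rfl hF)
    _ ≤ ∑' m : S, volume (F ∩ cell T α k m) := measure_biUnion_le _ S.to_countable _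
    _ ≤ ∑' m : S, a * volume (cell T α k m) := ENNReal.tsum_le_tsum fun m => h m m.2
    _ = a * volume (⋃ m ∈ S, cell T α k m) := by
        rw [ENNReal.tsum_mul_left, measure_biUnion S.to_countable (pairwiseDisjoint_cell hT S)
          fun _ _ => measurableSet_cell]

def touchingSubcells (T : ℝ) (α : ℕ × ℕ) (E : Set ℂ) (k' k : ℕ) (m : ℤ × ℤ) : Set (ℤ × ℤ) :=
  {m' | cell T α k' m' ⊆ cell T α k m ∧ (cell T α k' m' ∩ E).Nonempty}

theorem inter_cell_subset_biUnion_touchingSubcells (hT : 0 < T) {E : Set ℂ} {m : ℤ × ℤ}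
    (hk : k ≤ k') :
    E ∩ cell T α k m ⊆ ⋃ m' ∈ touchingSubcells T α E k' k m, cell T α k' m' :=
  fun z ⟨hzE, hz⟩ => mem_biUnion
    ⟨cell_subset_cell hT hk (mem_cell_cellIndex hT) hz, z, mem_cell_cellIndex hT, hzE⟩
    (mem_cell_cellIndex hT)

theorem biUnion_touchingSubcells_subset {E : Set ℂ} {m : ℤ × ℤ} :
    ⋃ m' ∈ touchingSubcells T α E k' k m, cell T α k' m' ⊆ cell T α k m :=
  iUnion₂_subset fun _ hm' => hm'.1

def IsPorousCell (T : ℝ) (α : ℕ × ℕ) (E : Set ℂ) (d : ℕ) (q : ℝ) (k : ℕ) (m : ℤ × ℤ) : Prop :=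
  volume (⋃ m' ∈ touchingSubcells T α E (k + d) k m, cell T α (k + d) m')
    ≤ ENNReal.ofReal q * volume (cell T α k m)

-- Only levels below `M` are counted, so that `volume_le_of_le_porousCount` can induct on `M - k`.
open Classical in
def porousCount (T : ℝ) (α : ℕ × ℕ) (E : Set ℂ) (d : ℕ) (q : ℝ) (M k : ℕ) (z : ℂ) : ℕ :=
  ((Finset.Ico k M).filter fun k' => IsPorousCell T α E d q k' (cellIndex T α k' z)).card

section porousCount

variable {E : Set ℂ} {d M : ℕ} {q : ℝ}

theorem porousCount_le_add :
    porousCount T α E d q M k z ≤ (k' - k) + porousCount T α E d q M k' z := by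
  classical
  unfold porousCount
  calc _ ≤ ((Finset.Ico k k').filter _ ∪ (Finset.Ico k' M).filter _).card := by
        refine Finset.card_le_card fun n hn => ?_
        simp only [Finset.mem_union, Finset.mem_filter, Finset.mem_Ico] at hn ⊢
        by_cases h : n < k' <;> [left; right] <;> exact ⟨⟨by omega, by omega⟩, hn.2⟩
    _ ≤ ((Finset.Ico k k').filter _).card + ((Finset.Ico k' M).filter _).card :=
        Finset.card_union_le _ _
    _ ≤ (k' - k) + ((Finset.Ico k' M).filter _).card := by
        gcongr
        exact (Finset.card_filter_le _ _).trans (Nat.card_Ico k k').le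

theorem porousCount_le_of_not_isPorousCell
    (h : ¬ IsPorousCell T α E d q k (cellIndex T α k z)) :
    porousCount T α E d q M k z ≤ porousCount T α E d q M (k + 1) z := by
  classical
  unfold porousCount
  refine Finset.card_le_card fun n hn => ?_
  simp only [Finset.mem_filter, Finset.mem_Ico] at hn ⊢
  refine ⟨⟨?_, hn.1.2⟩, hn.2⟩
  rcases hn.1.1.eq_or_lt with rfl | hlt
  · exact absurd hn.2 h
  · exact hlt

theorem porousCount_eq_zero (hM : M ≤ k) : porousCount T α E d q M k z = 0 := by
  simp [porousCount, Finset.Ico_eq_empty_of_le hM]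

theorem volume_le_of_le_porousCount (hT : 0 < T) (hd : 1 ≤ d) {lam : ℝ} (hlam0 : 0 ≤ lam)
    (hlam1 : lam ≤ 1) (hq : q ≤ lam ^ d) (M j k : ℕ) (m : ℤ × ℤ) :
    volume {z ∈ E ∩ cell T α k m | j ≤ porousCount T α E d q M k z}
      ≤ ENNReal.ofReal (lam ^ j) * volume (cell T α k m) := by
  induction hn : M - k using Nat.strong_induction_on generalizing j k m with
  | _ n ih =>
  rcases Nat.eq_zero_or_pos j with rfl | hj
  · exact (measure_mono fun z hz => hz.1.2).trans (by simp)
  rcases le_or_gt M k with hMk | hkM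
  · refine (measure_mono (t := ∅) fun z hz => ?_).trans (by simp)
    have := hz.2
    rw [porousCount_eq_zero hMk] at this
    omega
  -- A porous cell passes to its subcells `d` levels down, losing at most `d` counted levels but
  -- gaining the factor `q ≤ lam ^ d`; any other cell passes to its children with the same count.
  obtain ⟨k', j', hkk', hcount, hvol⟩ : ∃ k' j', k < k' ∧
      (∀ z ∈ cell T α k m, j ≤ porousCount T α E d q M k z → j' ≤ porousCount T α E d q M k' z) ∧
      ENNReal.ofReal (lam ^ j') * volume (⋃ m' ∈ touchingSubcells T α E k' k m, cell T α k' m')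
        ≤ ENNReal.ofReal (lam ^ j) * volume (cell T α k m) := by
    by_cases hP : IsPorousCell T α E d q k m
    · refine ⟨k + d, j - d, by omega, fun z _ hz => ?_, ?_⟩
      · have := hz.trans (porousCount_le_add (k' := k + d))
        omega
      · calc _ ≤ ENNReal.ofReal (lam ^ (j - d)) * (ENNReal.ofReal q * volume (cell T α k m)) := by
              gcongr; exact hP
          _ ≤ ENNReal.ofReal (lam ^ j) * volume (cell T α k m) := by
              rw [← mul_assoc, ← ENNReal.ofReal_mul (by positivity)]
              gcongr
              calc lam ^ (j - d) * q ≤ lam ^ (j - d) * lam ^ d := by gcongr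
                _ = lam ^ (j - d + d) := by rw [pow_add]
                _ ≤ lam ^ j := pow_le_pow_of_le_one hlam0 hlam1 (by omega)
    · refine ⟨k + 1, j, by omega, fun z hz hjz => ?_, ?_⟩
      · rw [← (mem_cell_iff hT).1 hz] at hP
        exact hjz.trans (porousCount_le_of_not_isPorousCell hP)
      · gcongr
        exact biUnion_touchingSubcells_subset
  refine (measure_le_of_subset_biUnion_cell hT
    ((sep_subset _ _).trans (inter_cell_subset_biUnion_touchingSubcells hT hkk'.le))
    fun m' _ => (measure_mono ?_).trans (ih _ (by omega) j' k' m' rfl)).trans hvol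
  rintro z ⟨⟨⟨hzE, hz⟩, hjz⟩, hz'⟩
  exact ⟨⟨hzE, hz'⟩, hcount z hz hjz⟩

end porousCount

theorem isPorousCell_of_ball_inter_eq_empty (hT : 0 < T) {E : Set ℂ} {d : ℕ} {q ρ : ℝ} {x y : ℂ}
    (hx : IsDeepInCell T α k x) (hy : dist y x + ρ / 2 < T / 2 ^ k / 7)
    (hρ : T / 2 ^ (k + d) ≤ ρ / 4) (hE : Metric.ball y ρ ∩ E = ∅)
    (hq : 1 - ρ ^ 2 / (2 * (T / 2 ^ k) ^ 2) ≤ q) :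
    IsPorousCell T α E d q k (cellIndex T α k x) := by
  set Q := cell T α k (cellIndex T α k x)
  have hρ0 : 0 < ρ := by linarith [show 0 < T / 2 ^ (k + d) by positivity]
  have hBQ : Metric.ball y (ρ / 2) ⊆ Q := fun z hz =>
    mem_cell_of_isDeepInCell hT hx <| by
      linarith [dist_triangle z y x, Metric.mem_ball.1 hz]
  -- A subcell meeting `ball y (ρ / 2)` has diameter less than `ρ / 2`, so it lies in the hole.
  have hsub : ⋃ m' ∈ touchingSubcells T α E (k + d) k (cellIndex T α k x), cell T α (k + d) m'
      ⊆ Q \ Metric.ball y (ρ / 2) := by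
    refine iUnion₂_subset fun m' ⟨hm'Q, hm'E⟩ => subset_sdiff.2 ⟨hm'Q, ?_⟩
    refine Set.disjoint_left.2 fun w hw hwB => hm'E.ne_empty (eq_empty_of_subset_empty ?_)
    refine hE ▸ inter_subset_inter_left E fun z hz => Metric.mem_ball.2 ?_
    linarith [dist_triangle z w y, dist_lt_of_mem_cell hz hw, Metric.mem_ball.1 hwB]
  have hh : 0 < T / 2 ^ k := by positivity
  have hq' : (T / 2 ^ k) ^ 2 - (ρ / 2) ^ 2 * Real.pi ≤ q * (T / 2 ^ k) ^ 2 := by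
    have hsplit : (1 - ρ ^ 2 / (2 * (T / 2 ^ k) ^ 2)) * (T / 2 ^ k) ^ 2
        = (T / 2 ^ k) ^ 2 - ρ ^ 2 / 2 := by
      field_simp
    calc _ ≤ (T / 2 ^ k) ^ 2 - ρ ^ 2 / 2 := by nlinarith [Real.pi_gt_three]
      _ ≤ q * (T / 2 ^ k) ^ 2 := hsplit ▸ by gcongr
  calc _ ≤ volume (Q \ Metric.ball y (ρ / 2)) := measure_mono hsub
    _ = volume Q - volume (Metric.ball y (ρ / 2)) :=
        measure_sdiff hBQ measurableSet_ball.nullMeasurableSet measure_ball_lt_top.ne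
    _ = ENNReal.ofReal ((T / 2 ^ k) ^ 2) - ENNReal.ofReal ((ρ / 2) ^ 2 * Real.pi) := by
        rw [volume_cell, Complex.volume_ball, ENNReal.ofReal_pow hh.le,
          ENNReal.ofReal_mul (by positivity), ENNReal.ofReal_pow (by positivity),
          ← NNReal.coe_real_pi, ENNReal.ofReal_coe_nnreal]
    _ ≤ ENNReal.ofReal q * volume Q := by
        rw [← ENNReal.ofReal_sub _ (by positivity), volume_cell, ← ENNReal.ofReal_pow hh.le,
          ← ENNReal.ofReal_mul' (by positivity)]
        exact ENNReal.ofReal_le_ofReal hq'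

def level (T s : ℝ) : ℕ := sInf {k : ℕ | T / 2 ^ k ≤ s}

theorem level_spec {s : ℝ} (hs : 0 < s) (hsT : s < T) :
    T / 2 ^ level T s ≤ s ∧ s < 2 * (T / 2 ^ level T s) := by
  have hne : {k : ℕ | T / 2 ^ k ≤ s}.Nonempty := by
    obtain ⟨n, hn⟩ := pow_unbounded_of_one_lt (T / s) one_lt_two
    rw [div_lt_iff₀ hs] at hn
    exact ⟨n, by rw [mem_ofPred_eq, div_le_iff₀ (by positivity)]; linarith⟩
  refine ⟨Nat.sInf_mem hne, ?_⟩
  obtain ⟨k, hk⟩ : ∃ k, level T s = k + 1 := Nat.exists_eq_succ_of_ne_zero fun h0 => by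
    have : T / 2 ^ level T s ≤ s := Nat.sInf_mem hne
    rw [h0, pow_zero, div_one] at this
    linarith
  have : ¬ T / 2 ^ k ≤ s := Nat.notMem_of_lt_sInf (show k < level T s by omega)
  rw [not_le] at this
  rw [hk, pow_succ]
  field_simp at this ⊢
  linarith

theorem isPorousCell_level (hT : 0 < T) {E : Set ℂ} {c ρ q : ℝ} {d : ℕ} {x y : ℂ}
    (hc : 0 < c) (hρ : 0 < ρ) (hρT : 14 * (1 + c) * ρ < T) (hy : y ∈ Metric.ball x (c * ρ))
    (hE : Metric.ball y ρ ∩ E = ∅) (hx : IsDeepInCell T α (level T (14 * (1 + c) * ρ)) x)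
    (hd : 56 * (1 + c) ≤ 2 ^ d) (hq : 1 - 1 / (392 * (1 + c) ^ 2) ≤ q) :
    IsPorousCell T α E d q (level T (14 * (1 + c) * ρ))
      (cellIndex T α (level T (14 * (1 + c) * ρ)) x) := by
  -- The mesh `h` satisfies `h ≤ 14 (1 + c) ρ < 2 h`, so `ball y (ρ / 2)` is within `h / 7` of `x`.
  obtain ⟨hle, hlt⟩ := level_spec (by positivity) hρT
  set h := T / 2 ^ level T (14 * (1 + c) * ρ)
  have hh : 0 < h := by positivity
  refine isPorousCell_of_ball_inter_eq_empty hT hx ?_ ?_ hE (le_trans ?_ hq)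
  · linarith [Metric.mem_ball.1 hy]
  · rw [pow_add, ← div_div, div_le_iff₀ (by positivity)]
    nlinarith
  · rw [sub_le_sub_iff_left, div_le_div_iff₀ (by positivity) (by positivity)]
    nlinarith

open Classical in
theorem card_filter_isDeepInCell_le_mul_porousCount (hT : 0 < T) {E : Set ℂ} {c q : ℝ}
    {d L M : ℕ} {K : Finset ℕ} {ρ : ℕ → ℝ} {x : ℂ} {y : ℕ → ℂ} (hc : 0 < c)
    (hρ : ∀ k ∈ K, 0 < ρ k) (hρT : ∀ k ∈ K, 14 * (1 + c) * ρ k < T)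
    (hhalf : ∀ k ∈ K, ∀ k' ∈ K, k + L ≤ k' → 2 * ρ k' ≤ ρ k)
    (hy : ∀ k ∈ K, y k ∈ Metric.ball x (c * ρ k)) (hE : ∀ k ∈ K, Metric.ball (y k) (ρ k) ∩ E = ∅)
    (hM : ∀ k ∈ K, level T (14 * (1 + c) * ρ k) < M)
    (hd : 56 * (1 + c) ≤ 2 ^ d) (hq : 1 - 1 / (392 * (1 + c) ^ 2) ≤ q) :
    (K.filter fun k => IsDeepInCell T α (level T (14 * (1 + c) * ρ k)) x).card
      ≤ L * porousCount T α E d q M 0 x := by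
  set G := K.filter fun k => IsDeepInCell T α (level T (14 * (1 + c) * ρ k)) x
  -- Radii with the same level are within a factor `2` of each other.
  refine (G.card_le_mul_card_image (f := fun k => level T (14 * (1 + c) * ρ k)) L
    fun ℓ _ => ?_).trans (Nat.mul_le_mul_left L ?_)
  · refine card_le_of_forall_lt_two_mul (r := ρ) (fun k hk k' hk' => ?_) fun k hk k' hk' => ?_
      <;> simp only [Finset.mem_filter, G] at hk hk'
    · exact hhalf k hk.1.1 k' hk'.1.1
    · have h1 := (level_spec (by have := hρ k hk.1.1; positivity) (hρT k hk.1.1)).2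
      have h2 := (level_spec (by have := hρ k' hk'.1.1; positivity) (hρT k' hk'.1.1)).1
      rw [hk.2.trans hk'.2.symm] at h1
      nlinarith
  · unfold porousCount
    refine Finset.card_le_card fun ℓ hℓ => ?_
    obtain ⟨k, hk, rfl⟩ := Finset.mem_image.1 hℓ
    obtain ⟨hkK, hdeep⟩ := Finset.mem_filter.1 hk
    exact Finset.mem_filter.2 ⟨Finset.mem_Ico.2 ⟨Nat.zero_le _, hM k hkK⟩,
      isPorousCell_level hT hc (hρ k hkK) (hρT k hkK) (hy k hkK) (hE k hkK) hdeep hd hq⟩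

open Classical in
theorem exists_card_div_four_le_card_filter_isDeepInCell (T : ℝ) (x : ℂ) (K : Finset ℕ)
    (f : ℕ → ℕ) : ∃ α ∈ ({0, 1} ×ˢ {0, 1} : Finset (ℕ × ℕ)),
      K.card / 4 ≤ (K.filter fun k => IsDeepInCell T α (f k) x).card := by
  let g : ℕ → ℕ × ℕ := fun k =>
    (if IsDeep T 0 (f k) x.re then 0 else 1, if IsDeep T 0 (f k) x.im then 0 else 1)
  have hg : ∀ k, IsDeepInCell T (g k) (f k) x := fun k => by
    constructor <;> dsimp only [g] <;> split_ifs with h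
    exacts [h, (isDeep_zero_or_isDeep_one T _ _).resolve_left h,
      h, (isDeep_zero_or_isDeep_one T _ _).resolve_left h]
  obtain ⟨α, hα, hcard⟩ := Finset.exists_le_card_fiber_of_mul_le_card_of_maps_to
    (f := g) (s := K) (t := {0, 1} ×ˢ {0, 1}) (n := K.card / 4)
    (fun k _ => by simp only [g]; split_ifs <;> simp) ⟨(0, 0), by simp⟩
    (by rw [mul_comm]; exact Nat.div_mul_le_self _ _)
  refine ⟨α, hα, hcard.trans (Finset.card_le_card fun k hk => ?_)⟩
  obtain ⟨hkK, rfl⟩ := Finset.mem_filter.1 hk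
  exact Finset.mem_filter.2 ⟨hkK, hg k⟩

theorem cell_subset_square {a b : ℝ} {m : ℤ × ℤ}
    (h : (cell T α 0 m ∩ Square a b T).Nonempty) :
    cell T α 0 m ⊆ Square (a - T) (b - T) (3 * T) := by
  obtain ⟨w, hw, hwS⟩ := h
  intro z hz
  have hre := abs_sub_lt_of_mem_interval hz.1 hw.1
  have him := abs_sub_lt_of_mem_interval hz.2 hw.2
  rw [pow_zero, div_one, abs_sub_lt_iff] at hre him
  obtain ⟨⟨_, _⟩, _, _⟩ := hwS
  exact ⟨⟨by linarith, by linarith⟩, by linarith, by linarith⟩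

theorem volume_le_of_le_porousCount_of_subset_square (hT : 0 < T) {E : Set ℂ} {a b q lam : ℝ}
    {d : ℕ} (hES : E ⊆ Square a b T) (hd : 1 ≤ d) (hlam0 : 0 ≤ lam) (hlam1 : lam ≤ 1)
    (hq : q ≤ lam ^ d) (M j : ℕ) :
    volume {z ∈ E | j ≤ porousCount T α E d q M 0 z}
      ≤ ENNReal.ofReal (lam ^ j) * (9 * volume (Square a b T)) := by
  set S := {m | (cell T α 0 m ∩ Square a b T).Nonempty}
  have hcover : {z ∈ E | j ≤ porousCount T α E d q M 0 z} ⊆ ⋃ m ∈ S, cell T α 0 m :=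
    fun z hz => mem_biUnion ⟨z, mem_cell_cellIndex hT, hES hz.1⟩ (mem_cell_cellIndex hT)
  calc _ ≤ ENNReal.ofReal (lam ^ j) * volume (⋃ m ∈ S, cell T α 0 m) := by
        refine measure_le_of_subset_biUnion_cell hT hcover fun m _ => (measure_mono ?_).trans
          (volume_le_of_le_porousCount (E := E) hT hd hlam0 hlam1 hq M j 0 m)
        exact fun z hz => ⟨⟨hz.1.1, hz.2⟩, hz.1.2⟩
    _ ≤ ENNReal.ofReal (lam ^ j) * volume (Square (a - T) (b - T) (3 * T)) := by
        gcongr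
        exact iUnion₂_subset fun m hm => cell_subset_square hm
    _ = ENNReal.ofReal (lam ^ j) * (9 * volume (Square a b T)) := by
        rw [volume_square, volume_square, ENNReal.ofReal_mul (by norm_num), mul_pow,
          ENNReal.ofReal_ofNat]
        norm_num

end ShiftedDyadic

end

open ShiftedDyadic in
theorem volume_le_of_porous_at_scales {E : Set ℂ} {a b l c lam : ℝ} {d L : ℕ} {K : Finset ℕ}
    {r : ℕ → ℂ → ℝ} {y : ℕ → ℂ → ℂ} (hl : 0 < l) (hc : 0 < c) (hES : E ⊆ Square a b l)
    (hr : ∀ x ∈ E, ∀ k ∈ K, 0 < r k x) (hrl : ∀ x ∈ E, ∀ k ∈ K, 14 * (1 + c) * r k x < l)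
    (hhalf : ∀ x ∈ E, ∀ k ∈ K, ∀ k' ∈ K, k + L ≤ k' → 2 * r k' x ≤ r k x)
    (hy : ∀ x ∈ E, ∀ k ∈ K, y k x ∈ Metric.ball x (c * r k x))
    (hE : ∀ x ∈ E, ∀ k ∈ K, Metric.ball (y k x) (r k x) ∩ E = ∅)
    (hd : 56 * (1 + c) ≤ 2 ^ d) (hlam0 : 0 ≤ lam) (hlam1 : lam ≤ 1)
    (hlam : 1 - 1 / (392 * (1 + c) ^ 2) ≤ lam ^ d) :
    volume E ≤ 36 * ENNReal.ofReal (lam ^ (K.card / (4 * L))) * volume (Square a b l) := by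
  have hd1 : 1 ≤ d := Nat.one_le_iff_ne_zero.2 fun h => by
    rw [h, pow_zero] at hd
    linarith
  set q := 1 - 1 / (392 * (1 + c) ^ 2)
  set F : ℕ → Set ℂ := fun M => {x ∈ E | ∀ k ∈ K, level l (14 * (1 + c) * r k x) < M}
  have hF : Monotone F := fun M M' h x hx => ⟨hx.1, fun k hk => (hx.2 k hk).trans_le h⟩
  have hEF : E ⊆ ⋃ M, F M := fun x hx => mem_iUnion.2
    ⟨K.sup (fun k => level l (14 * (1 + c) * r k x)) + 1, hx, fun k hk =>
      Nat.lt_succ_of_le (Finset.le_sup (f := fun k => level l (14 * (1 + c) * r k x)) hk)⟩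
  have hFα : ∀ M, F M ⊆ ⋃ α ∈ ({0, 1} ×ˢ {0, 1} : Finset (ℕ × ℕ)),
      {x ∈ E | K.card / (4 * L) ≤ porousCount l α E d q M 0 x} := by
    rintro M x ⟨hx, hxM⟩
    obtain ⟨α, hα, hcard⟩ := exists_card_div_four_le_card_filter_isDeepInCell l x K
      fun k => level l (14 * (1 + c) * r k x)
    refine mem_biUnion hα ⟨hx, ?_⟩
    rw [← Nat.div_div_eq_div_mul]
    refine Nat.div_le_of_le_mul ?_
    exact hcard.trans (card_filter_isDeepInCell_le_mul_porousCount hl hc (hr x hx) (hrl x hx)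
      (hhalf x hx) (hy x hx) (hE x hx) hxM hd le_rfl)
  refine (measure_mono hEF).trans (hF.measure_iUnion.trans_le (iSup_le fun M => ?_))
  calc volume (F M)
      ≤ ∑ α ∈ {0, 1} ×ˢ {0, 1}, volume {x ∈ E | K.card / (4 * L) ≤ porousCount l α E d q M 0 x} :=
        (measure_mono (hFα M)).trans (measure_biUnion_finset_le _ _)
    _ ≤ ({0, 1} ×ˢ {0, 1} : Finset (ℕ × ℕ)).card •
          (ENNReal.ofReal (lam ^ (K.card / (4 * L))) * (9 * volume (Square a b l))) :=
        Finset.sum_le_card_nsmul _ _ _ fun α _ =>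
          volume_le_of_le_porousCount_of_subset_square hl hES hd1 hlam0 hlam1 hlam M _
    _ = 36 * ENNReal.ofReal (lam ^ (K.card / (4 * L))) * volume (Square a b l) := by
        rw [nsmul_eq_mul, Finset.card_product, Finset.card_pair zero_ne_one]
        push_cast
        ring

theorem volume_le_of_porous_chain {E : Set ℂ} {a b l c η lam : ℝ} {d L k₀ N : ℕ}
    {r : ℕ → ℂ → ℝ} {y : ℕ → ℂ → ℂ} (hl : 0 < l) (hc : 0 < c) (hη0 : 0 ≤ η) (hη1 : η ≤ 1)
    (hES : E ⊆ Square a b l) (h1 : ∀ x ∈ E, 0 < r 1 x ∧ r 1 x ≤ l * η)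
    (hstep : ∀ x ∈ E, ∀ n, 1 ≤ n → n < N → 0 < r (n + 1) x ∧ r (n + 1) x ≤ η * r n x)
    (hy : ∀ x ∈ E, ∀ n, 1 ≤ n → n ≤ N → y n x ∈ Metric.ball x (c * r n x))
    (hE : ∀ x ∈ E, ∀ n, 1 ≤ n → n ≤ N → Metric.ball (y n x) (r n x) ∩ E = ∅)
    (hL : η ^ L ≤ 1 / 2) (hk₀ : 14 * (1 + c) * η ^ k₀ < 1) (hd : 56 * (1 + c) ≤ 2 ^ d)
    (hlam0 : 0 ≤ lam) (hlam1 : lam ≤ 1) (hlam : 1 - 1 / (392 * (1 + c) ^ 2) ≤ lam ^ d) :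
    volume E ≤ 36 * ENNReal.ofReal (lam ^ ((N - k₀) / (4 * L))) * volume (Square a b l) := by
  have hK (k) (hk : k ∈ Finset.Icc (k₀ + 1) N) : 1 ≤ k ∧ k ≤ N := by
    rw [Finset.mem_Icc] at hk; omega
  have hbound (x) (hx : x ∈ E) (k) (hk : k ∈ Finset.Icc (k₀ + 1) N) :=
    pos_and_le_pow_mul (r := fun n => r n x) hη0 (h1 x hx) (hstep x hx) (hK k hk).1 (hK k hk).2
  rw [show N - k₀ = (Finset.Icc (k₀ + 1) N).card by simp]
  refine volume_le_of_porous_at_scales hl hc hES (fun x hx k hk => (hbound x hx k hk).1)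
    (fun x hx k hk => ?_) (fun x hx k hk k' hk' hkk' => ?_)
    (fun x hx k hk => hy x hx k (hK k hk).1 (hK k hk).2)
    (fun x hx k hk => hE x hx k (hK k hk).1 (hK k hk).2) hd hlam0 hlam1 hlam
  · have hηk : η ^ k ≤ η ^ k₀ := pow_le_pow_of_le_one hη0 hη1 (by simp at hk; omega)
    calc 14 * (1 + c) * r k x ≤ 14 * (1 + c) * η ^ k₀ * l := by
          rw [mul_assoc _ (η ^ k₀)]
          gcongr
          exact (hbound x hx k hk).2.trans (by gcongr)
      _ < l := by nlinarith
  · have hchain := le_pow_mul_of_forall_le_mul (r := fun n => r n x) hη0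
      (fun n hn hnN => (hstep x hx n hn hnN).2) (hK k hk).1 (by omega) (hK k' hk').2
    have hηL : η ^ (k' - k) ≤ 1 / 2 := (pow_le_pow_of_le_one hη0 hη1 (by omega)).trans hL
    nlinarith [(hbound x hx k hk).1]

theorem stmt0 (c η : ℝ) (hc : 0 < c) (hη0 : 0 < η) (hη1 : η < 1) :
    ∃ (N₁ : ℕ) (lam : ℝ), 0 < N₁ ∧ 0 < lam ∧ lam < 1 ∧
      ∀ N : ℕ, N₁ ≤ N →
      ∀ (a b l : ℝ), 0 < l →
      ∀ E : Set ℂ, E.Nonempty → MeasurableSet E → E ⊆ Square a b l →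
      ∀ (r : ℕ → ℂ → ℝ) (y : ℕ → ℂ → ℂ),
        (∀ x ∈ E, 0 < r 1 x ∧ r 1 x ≤ l * η) →
        (∀ x ∈ E, ∀ n, 1 ≤ n → n < N → 0 < r (n + 1) x ∧ r (n + 1) x ≤ η * r n x) →
        (∀ x ∈ E, ∀ n, 1 ≤ n → n ≤ N → y n x ∈ Metric.ball x (c * r n x)) →
        (∀ x ∈ E, ∀ n, 1 ≤ n → n ≤ N → Metric.ball (y n x) (r n x) ∩ E = ∅) →
        volume E ≤ ENNReal.ofReal (lam ^ N) * volume (Square a b l) := by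
  obtain ⟨d, hd⟩ := pow_unbounded_of_one_lt (56 * (1 + c)) one_lt_two
  obtain ⟨L, hL⟩ := exists_pow_lt_of_lt_one one_half_pos hη1
  obtain ⟨k₀, hk₀⟩ := exists_pow_lt_of_lt_one (by positivity : (0 : ℝ) < 1 / (14 * (1 + c))) hη1
  have hd0 : d ≠ 0 := by rintro rfl; rw [pow_zero] at hd; linarith
  have hL0 : L ≠ 0 := by rintro rfl; norm_num at hL
  obtain ⟨lam, hlam0, hlam1, hlam⟩ := exists_pos_lt_one_le_pow
    (q := 1 - 1 / (392 * (1 + c) ^ 2))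
    (by rw [sub_pos, div_lt_one (by positivity)]; nlinarith) (sub_lt_self _ (by positivity)) hd0
  obtain ⟨N₁, Λ, hN₁, hΛ0, hΛ1, hΛ⟩ :=
    exists_forall_mul_pow_le_pow (C := 36) hlam0 hlam1 (by norm_num) (p := 4 * L) (by omega) k₀
  refine ⟨N₁, Λ, hN₁, hΛ0, hΛ1, fun N hN a b l hl E _ _ hES r y h1 hstep hy hE => ?_⟩
  calc volume E ≤ 36 * ENNReal.ofReal (lam ^ ((N - k₀) / (4 * L))) * volume (Square a b l) :=
        volume_le_of_porous_chain hl hc hη0.le hη1.le hES h1 hstep hy hE hL.le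
          ((lt_div_iff₀' (by positivity)).1 hk₀) hd.le hlam0.le hlam1.le hlam
    _ ≤ ENNReal.ofReal (Λ ^ N) * volume (Square a b l) := by
        rw [← ENNReal.ofReal_ofNat, ← ENNReal.ofReal_mul (by norm_num)]
        gcongr
        exact hΛ N hN
end

section
/- There exists a universal constant c > 0 such that the following holds. Let S ⊂ ℂ be a square of side length l, let E ⊆ S be a nonempty measurable set, and let 0 < λ < 1. If there exists a function r : E → ℝ such that for every x ∈ E one has 0 < r(x) < l and area(B(x, r(x)) ∩ E) ≤ λ · area(B(x, r(x))), then area(E) ≤ c · λ · area(S). -/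
open MeasureTheory

lemma volume_Square (a b l : ℝ) :
    volume (Square a b l) = ENNReal.ofReal l * ENNReal.ofReal l := by
  have h : Square a b l =
      Complex.measurableEquivRealProd ⁻¹' (Set.Icc a (a+l) ×ˢ Set.Icc b (b+l)) := by
    ext z
    simp only [Square, Set.mem_preimage, Set.mem_prod, Set.mem_Icc, Set.mem_setOf_eq,
      Complex.measurableEquivRealProd_apply]
  rw [h, Complex.volume_preserving_equiv_real_prod.measure_preimage
    ((measurableSet_Icc.prod measurableSet_Icc).nullMeasurableSet)]
  rw [Measure.volume_eq_prod, Measure.prod_prod, Real.volume_Icc, Real.volume_Icc]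
  simp

theorem stmt1 :
    ∃ c : ℝ, 0 < c ∧
      ∀ (a b l : ℝ), 0 < l →
      ∀ E : Set ℂ, E.Nonempty → MeasurableSet E → E ⊆ Square a b l →
      ∀ lam : ℝ, 0 < lam → lam < 1 →
      ∀ r : ℂ → ℝ,
        (∀ x ∈ E, 0 < r x ∧ r x < l) →
        (∀ x ∈ E, volume (Metric.ball x (r x) ∩ E) ≤
            ENNReal.ofReal lam * volume (Metric.ball x (r x))) →
        volume E ≤ ENNReal.ofReal (c * lam) * volume (Square a b l) := by
  obtain ⟨N, τ, hτ, hN⟩ := HasBesicovitchCovering.no_satelliteConfig (α := ℂ)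
  refine ⟨9 * (N + 1), by positivity, ?_⟩
  intro a b l hl E hE hEm hES lam hlam hlam1 r hr hr2
  set q : Besicovitch.BallPackage E ℂ :=
    { c := Subtype.val
      r := fun x => r x
      rpos := fun x => (hr x x.2).1
      r_bound := l
      r_le := fun x => (hr x x.2).2.le } with hq
  obtain ⟨s, hs, hcov⟩ := Besicovitch.exist_disjoint_covering_families hτ hN q
  -- each ball is contained in the enlarged square
  have hball : ∀ j : E, Metric.closedBall (j : ℂ) (r j) ⊆ Square (a - l) (b - l) (3 * l) := by
    intro j z hz
    obtain ⟨⟨hj1, hj2⟩, hj3, hj4⟩ := hES j.2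
    have hd : dist z (j : ℂ) ≤ r j := Metric.mem_closedBall.1 hz
    have hrl : r (j : ℂ) < l := (hr j j.2).2
    have hre : |z.re - (j : ℂ).re| ≤ r j := by
      simpa [Complex.dist_eq, Complex.sub_re] using
        (Complex.abs_re_le_norm (z - (j : ℂ))).trans (by rwa [← Complex.dist_eq])
    have him : |z.im - (j : ℂ).im| ≤ r j := by
      simpa [Complex.dist_eq, Complex.sub_im] using
        (Complex.abs_im_le_norm (z - (j : ℂ))).trans (by rwa [← Complex.dist_eq])
    rw [abs_le] at hre him
    obtain ⟨h1, h2⟩ := hre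
    obtain ⟨h3, h4⟩ := him
    exact ⟨⟨by linarith, by linarith⟩, by linarith, by linarith⟩
  have hsc : ∀ i, (s i).Countable := by
    intro i
    refine (hs i).countable_of_nonempty_interior (fun j _ => ?_)
    rw [interior_closedBall _ (q.rpos j).ne']
    exact Metric.nonempty_ball.2 (q.rpos j)
  -- per-family estimate
  have key : ∀ i : Fin N, volume (E ∩ ⋃ j ∈ s i, Metric.ball (q.c j) (q.r j))
      ≤ ENNReal.ofReal lam * volume (Square (a - l) (b - l) (3 * l)) := by
    intro i
    calc volume (E ∩ ⋃ j ∈ s i, Metric.ball (q.c j) (q.r j))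
        = volume (⋃ j ∈ s i, E ∩ Metric.ball (q.c j) (q.r j)) := by
          rw [Set.inter_iUnion₂]
      _ ≤ ∑' j : s i, volume (E ∩ Metric.ball (q.c j) (q.r j)) :=
          measure_biUnion_le volume (hsc i) _
      _ ≤ ∑' j : s i, ENNReal.ofReal lam * volume (Metric.ball ((j : E) : ℂ) (r (j : E))) := by
          refine ENNReal.tsum_le_tsum (fun j => ?_)
          rw [Set.inter_comm]
          exact hr2 _ (j : E).2
      _ = ENNReal.ofReal lam * ∑' j : s i, volume (Metric.ball ((j : E) : ℂ) (r (j : E))) :=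
          ENNReal.tsum_mul_left
      _ ≤ ENNReal.ofReal lam * ∑' j : s i, volume (Metric.closedBall ((j : E) : ℂ) (r (j : E))) :=
          mul_le_mul_right (ENNReal.tsum_le_tsum fun j =>
            measure_mono Metric.ball_subset_closedBall) _
      _ = ENNReal.ofReal lam * volume (⋃ j ∈ s i, Metric.closedBall (q.c j) (q.r j)) := by
          rw [measure_biUnion (hsc i) (hs i) (fun j _ => measurableSet_closedBall)]
      _ ≤ ENNReal.ofReal lam * volume (Square (a - l) (b - l) (3 * l)) := by
          refine mul_le_mul_right (measure_mono ?_) _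
          exact Set.iUnion₂_subset fun j _ => hball j
  -- assemble
  have hEcov : E ⊆ ⋃ i : Fin N, E ∩ ⋃ j ∈ s i, Metric.ball (q.c j) (q.r j) := by
    intro x hx
    have : x ∈ ⋃ i : Fin N, ⋃ j ∈ s i, Metric.ball (q.c j) (q.r j) := by
      apply hcov
      exact ⟨⟨x, hx⟩, rfl⟩
    obtain ⟨i, hi⟩ := Set.mem_iUnion.1 this
    exact Set.mem_iUnion.2 ⟨i, hx, hi⟩
  have hvol : volume E ≤ (N : ENNReal) *
      (ENNReal.ofReal lam * volume (Square (a - l) (b - l) (3 * l))) := by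
    calc volume E ≤ volume (⋃ i : Fin N, E ∩ ⋃ j ∈ s i, Metric.ball (q.c j) (q.r j)) :=
          measure_mono hEcov
      _ ≤ ∑ i : Fin N, volume (E ∩ ⋃ j ∈ s i, Metric.ball (q.c j) (q.r j)) :=
          measure_iUnion_fintype_le _ _
      _ ≤ ∑ _i : Fin N, ENNReal.ofReal lam * volume (Square (a - l) (b - l) (3 * l)) :=
          Finset.sum_le_sum fun i _ => key i
      _ = (N : ENNReal) * (ENNReal.ofReal lam * volume (Square (a - l) (b - l) (3 * l))) := by
          simp [Finset.sum_const, mul_comm]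
  refine hvol.trans ?_
  rw [volume_Square, volume_Square]
  have h3 : ENNReal.ofReal (3 * l) = ENNReal.ofReal 3 * ENNReal.ofReal l :=
    ENNReal.ofReal_mul (by norm_num)
  have hNcast : (N : ENNReal) = ENNReal.ofReal (N : ℝ) := by
    simp
  rw [h3, hNcast]
  calc ENNReal.ofReal (N : ℝ) * (ENNReal.ofReal lam *
        (ENNReal.ofReal 3 * ENNReal.ofReal l * (ENNReal.ofReal 3 * ENNReal.ofReal l)))
      = (ENNReal.ofReal (N : ℝ) * ENNReal.ofReal lam * ENNReal.ofReal 3 * ENNReal.ofReal 3) *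
        (ENNReal.ofReal l * ENNReal.ofReal l) := by ring
    _ = ENNReal.ofReal ((N : ℝ) * lam * 3 * 3) * (ENNReal.ofReal l * ENNReal.ofReal l) := by
        rw [← ENNReal.ofReal_mul (Nat.cast_nonneg N), ← ENNReal.ofReal_mul (by positivity),
          ← ENNReal.ofReal_mul (by positivity)]
    _ ≤ ENNReal.ofReal (9 * ((N : ℝ) + 1) * lam) * (ENNReal.ofReal l * ENNReal.ofReal l) := by
        refine mul_le_mul_left (ENNReal.ofReal_le_ofReal ?_) _
        nlinarith [Nat.cast_nonneg (α := ℝ) N]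
end
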